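/- (Dunkl-SUSY eigenfunctions for the shifted oscillator.) Let s > 0, n ≥ 1 an integer, and define ψ±(x) = e^{−s²x²/2}·(H_{2n}(s·x) ± 2√n · H_{2n−1}(s·x)). Then for all x ∈ ℝ, d/dx[ψ±(−x)] + s²x·ψ±(x) = ±2s√n · ψ±(x); that is, ψ± are eigenfunctions of the Dunkl operator L_v with v(x) = s²x, with eigenvalues ±2s√n. -/

import Mathlib

/-!
The function `ψ_c(y) = e^{-s²y²/2} (H_{m+1}(sy) + c·H_m(sy))` with `m` odd satisfies
`ψ_c(-y) = ψ_{-c}(y)` by the parity of Hermite polynomials. Differentiating with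
`H_k' = 2k·H_{k-1}` and eliminating `H_{m-1}` through the three-term recurrence gives
`(L_v ψ_c)(x) = s·e^{-s²x²/2} (c·H_{m+1}(sx) + 2(m+1)·H_m(sx))`, which is `s·c·ψ_c(x)`
exactly when `c² = 2(m+1)`. For `m = 2n - 1` this means `c = ±2√n`.
-/

/-- Physicists' Hermite polynomials: `H₀ = 1`, `H₁(x) = 2x`,
`H_{n+2}(x) = 2x·H_{n+1}(x) - 2(n+1)·H_n(x)`. -/
noncomputable def hermite : ℕ → ℝ → ℝ
  | 0 => fun _ => 1
  | 1 => fun x => 2 * x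
  | (n + 2) => fun x => 2 * x * hermite (n + 1) x - 2 * ((n : ℝ) + 1) * hermite n x

open Real

theorem hermite_neg (m : ℕ) (x : ℝ) : hermite m (-x) = (-1) ^ m * hermite m x := by
  induction m using Nat.twoStepInduction with
  | zero => simp [hermite]
  | one => simp [hermite]
  | more m ih₀ ih₁ =>
    simp only [hermite, ih₀, ih₁]
    ring

/-- The recurrence in the form `H_{m+1} = 2x·H_m - 2m·H_{m-1}`; at `m = 0` the junk value
`H_{0-1} = H_0` is multiplied by `0`. -/
theorem hermite_succ (m : ℕ) (x : ℝ) :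
    hermite (m + 1) x = 2 * x * hermite m x - 2 * m * hermite (m - 1) x := by
  cases m with
  | zero => simp [hermite]
  | succ m => simp [hermite]

theorem hasDerivAt_hermite (m : ℕ) (x : ℝ) :
    HasDerivAt (hermite m) (2 * m * hermite (m - 1) x) x := by
  induction m using Nat.twoStepInduction generalizing x with
  | zero => simpa [hermite] using hasDerivAt_const x (1 : ℝ)
  | one => simpa [hermite] using (hasDerivAt_id x).const_mul (2 : ℝ)
  | more m ih₀ ih₁ =>
    have h := (((hasDerivAt_id x).const_mul 2).mul (ih₁ x)).sub
      ((ih₀ x).const_mul (2 * ((m : ℝ) + 1)))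
    refine h.congr_deriv ?_
    rw [show m + 2 - 1 = m + 1 by omega, show m + 1 - 1 = m by omega, hermite_succ m x]
    simp only [id, Nat.cast_add, Nat.cast_one]
    ring

noncomputable def gaussHermite (s c : ℝ) (m : ℕ) : ℝ → ℝ := fun y =>
  exp (-(s ^ 2 * y ^ 2) / 2) * (hermite (m + 1) (s * y) + c * hermite m (s * y))

noncomputable def dunkl (v f : ℝ → ℝ) (x : ℝ) : ℝ :=
  deriv (f ∘ Neg.neg) x + v x * f x

theorem gaussHermite_comp_neg (s c : ℝ) {m : ℕ} (hm : Odd m) :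
    gaussHermite s c m ∘ Neg.neg = gaussHermite s (-c) m := by
  funext y
  simp only [gaussHermite, Function.comp_apply, mul_neg, hermite_neg, hm.neg_one_pow,
    hm.add_one.neg_one_pow, neg_sq]
  ring

theorem hasDerivAt_gaussHermite (s c : ℝ) (m : ℕ) (x : ℝ) :
    HasDerivAt (gaussHermite s c m)
      (exp (-(s ^ 2 * x ^ 2) / 2) * (-(s ^ 2 * x) * (hermite (m + 1) (s * x) + c * hermite m (s * x))
        + s * (2 * ((m : ℝ) + 1) * hermite m (s * x) + c * (2 * m * hermite (m - 1) (s * x))))) x := by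
  have hlin : HasDerivAt (fun y : ℝ => s * y) s x := by
    simpa using (hasDerivAt_id x).const_mul s
  have hgauss : HasDerivAt (fun y : ℝ => -(s ^ 2 * y ^ 2) / 2) (-(s ^ 2 * x)) x := by
    refine (((hasDerivAt_pow 2 x).const_mul (s ^ 2)).neg.div_const 2).congr_deriv ?_
    norm_num
    ring
  have h := hgauss.exp.mul (((hasDerivAt_hermite (m + 1) (s * x)).comp x hlin).add
    (((hasDerivAt_hermite m (s * x)).comp x hlin).const_mul c))
  refine h.congr_deriv ?_
  simp only [Pi.add_apply, Function.comp_apply, Nat.cast_add, Nat.cast_one,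
    add_tsub_cancel_right]
  ring

theorem dunkl_gaussHermite (s c : ℝ) {m : ℕ} (hm : Odd m) (hc : c ^ 2 = 2 * ((m : ℝ) + 1))
    (x : ℝ) :
    dunkl (fun y => s ^ 2 * y) (gaussHermite s c m) x = s * c * gaussHermite s c m x := by
  rw [dunkl, gaussHermite_comp_neg s c hm, (hasDerivAt_gaussHermite s (-c) m x).deriv]
  simp only [gaussHermite, hermite_succ m (s * x)]
  linear_combination -s * exp (-(s ^ 2 * x ^ 2) / 2) * hermite m (s * x) * hc

theorem dunkl_susy_shifted_oscillator_general (s : ℝ) (n : ℕ) (hn : 1 ≤ n) :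
    (∀ x : ℝ,
      deriv ((fun y => Real.exp (-(s ^ 2 * y ^ 2) / 2) *
          (hermite (2 * n) (s * y) + 2 * Real.sqrt n * hermite (2 * n - 1) (s * y))) ∘ Neg.neg) x
        + s ^ 2 * x * (Real.exp (-(s ^ 2 * x ^ 2) / 2) *
          (hermite (2 * n) (s * x) + 2 * Real.sqrt n * hermite (2 * n - 1) (s * x)))
      = 2 * s * Real.sqrt n * (Real.exp (-(s ^ 2 * x ^ 2) / 2) *
          (hermite (2 * n) (s * x) + 2 * Real.sqrt n * hermite (2 * n - 1) (s * x)))) ∧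
    (∀ x : ℝ,
      deriv ((fun y => Real.exp (-(s ^ 2 * y ^ 2) / 2) *
          (hermite (2 * n) (s * y) - 2 * Real.sqrt n * hermite (2 * n - 1) (s * y))) ∘ Neg.neg) x
        + s ^ 2 * x * (Real.exp (-(s ^ 2 * x ^ 2) / 2) *
          (hermite (2 * n) (s * x) - 2 * Real.sqrt n * hermite (2 * n - 1) (s * x)))
      = -(2 * s * Real.sqrt n) * (Real.exp (-(s ^ 2 * x ^ 2) / 2) *
          (hermite (2 * n) (s * x) - 2 * Real.sqrt n * hermite (2 * n - 1) (s * x)))) := by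
  have hodd : Odd (2 * n - 1) := ⟨n - 1, by omega⟩
  have hsucc : 2 * n - 1 + 1 = 2 * n := by omega
  have hsq : (2 * √(n : ℝ)) ^ 2 = 2 * (((2 * n - 1 : ℕ) : ℝ) + 1) := by
    rw [mul_pow, sq_sqrt n.cast_nonneg, ← Nat.cast_add_one, hsucc]
    push_cast
    ring
  have hplus := dunkl_gaussHermite s _ hodd hsq
  have hminus := dunkl_gaussHermite s _ hodd ((neg_sq _).trans hsq)
  unfold dunkl gaussHermite at hplus hminus
  simp only [hsucc, neg_mul, ← sub_eq_add_neg] at hplus hminus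
  refine ⟨fun x => ?_, fun x => ?_⟩
  · rw [hplus x]
    ring
  · rw [hminus x]
    ring

/-- Dunkl-SUSY eigenfunctions for the shifted oscillator: the functions
`ψ±(x) = e^{-s²x²/2}(H_{2n}(sx) ± 2√n·H_{2n-1}(sx))` satisfy
`L_v ψ± = ±2s√n · ψ±` for `v(x) = s²x`. -/
theorem dunkl_susy_shifted_oscillator (s : ℝ) (hs : 0 < s) (n : ℕ) (hn : 1 ≤ n) :
    (∀ x : ℝ,
      deriv ((fun y => Real.exp (-(s ^ 2 * y ^ 2) / 2) *
          (hermite (2 * n) (s * y) + 2 * Real.sqrt n * hermite (2 * n - 1) (s * y))) ∘ Neg.neg) x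
        + s ^ 2 * x * (Real.exp (-(s ^ 2 * x ^ 2) / 2) *
          (hermite (2 * n) (s * x) + 2 * Real.sqrt n * hermite (2 * n - 1) (s * x)))
      = 2 * s * Real.sqrt n * (Real.exp (-(s ^ 2 * x ^ 2) / 2) *
          (hermite (2 * n) (s * x) + 2 * Real.sqrt n * hermite (2 * n - 1) (s * x)))) ∧
    (∀ x : ℝ,
      deriv ((fun y => Real.exp (-(s ^ 2 * y ^ 2) / 2) *
          (hermite (2 * n) (s * y) - 2 * Real.sqrt n * hermite (2 * n - 1) (s * y))) ∘ Neg.neg) x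
        + s ^ 2 * x * (Real.exp (-(s ^ 2 * x ^ 2) / 2) *
          (hermite (2 * n) (s * x) - 2 * Real.sqrt n * hermite (2 * n - 1) (s * x)))
      = -(2 * s * Real.sqrt n) * (Real.exp (-(s ^ 2 * x ^ 2) / 2) *
          (hermite (2 * n) (s * x) - 2 * Real.sqrt n * hermite (2 * n - 1) (s * x)))) :=
  dunkl_susy_shifted_oscillator_general s n hn
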